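/- arXiv:1202.1833 — 2 statements merged into one kernel-verified Lean document; each statement's English description precedes it below -/
import Mathlib

section
/- If C is a geometrically griddable permutation class and U is a partially well-ordered permutation class, then the class C[U] is partially well-ordered. -/
/-!
Let `C ⊆ Geom(M)`. Cut every segment of the standard figure of `M` at its midpoint: a point of
the figure then lies on a half-segment at distance `v ∈ [0, 1/2]` from one of its ends, and both
of its coordinates are monotone in `v` along that half-segment. Encode `σ[α] ∈ C[U]` by the word,
read in increasing `v`, whose letters are the half-segment of each point of `σ` together with
its block `α i ∈ U`. If the word of one permutation embeds into that of another, letter to letter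
with equal half-segments and contained blocks, then the matched points of the skeletons compare
the same way, so the first permutation is contained in the second. Letters form a pwo set (a
finite set times `U`), hence by Higman's lemma so do words, and hence so does `C[U]`.
-/

open scoped BigOperators

/-- A permutation of length `n`, in the combinatorial sense. -/
abbrev PermOf (n : ℕ) : Type := Equiv.Perm (Fin n)

/-- Pattern containment between permutations of possibly different lengths. -/
def PattContains {k n : ℕ} (σ : PermOf k) (π : PermOf n) : Prop :=
  ∃ f : Fin k ↪o Fin n, ∀ s t : Fin k, σ s < σ t ↔ π (f s) < π (f t)

/-- A permutation of arbitrary finite length. -/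
abbrev Permutation : Type := Σ n : ℕ, PermOf n

/-- The containment order on permutations. -/
def PermLe (σ π : Permutation) : Prop := PattContains σ.2 π.2

/-- A permutation class: a set of permutations closed downwards under containment. -/
def IsPermClass (C : Set Permutation) : Prop :=
  ∀ σ π : Permutation, PermLe σ π → π ∈ C → σ ∈ C

/-- The generating function of a set of permutations. -/
noncomputable def gfOf (C : Set Permutation) : PowerSeries ℚ :=
  PowerSeries.mk fun n => ({π : PermOf n | (⟨n, π⟩ : Permutation) ∈ C}.ncard : ℚ)

/-- A formal power series is rational if it satisfies `q * f = p` for polynomials `p, q`, `q ≠ 0`. -/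
def IsRationalPS (f : PowerSeries ℚ) : Prop :=
  ∃ p q : Polynomial ℚ, q ≠ 0 ∧
    (Polynomial.coeToPowerSeries.ringHom q) * f = Polynomial.coeToPowerSeries.ringHom p

/-- A formal power series is algebraic if `P(x, f) = 0` for a nonzero polynomial `P` in two
variables over `ℚ` (viewed as a polynomial in the second variable with polynomial coefficients). -/
def IsAlgebraicPS (f : PowerSeries ℚ) : Prop :=
  ∃ P : Polynomial (Polynomial ℚ), P ≠ 0 ∧
    Polynomial.eval₂ Polynomial.coeToPowerSeries.ringHom f P = 0

/-- A set of permutations is partially well-ordered if it contains no infinite antichain. -/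
def IsPwoClass (C : Set Permutation) : Prop :=
  ∀ A : Set Permutation, A ⊆ C →
    (∀ x ∈ A, ∀ y ∈ A, x ≠ y → ¬ PermLe x y) → A.Finite

/-- The basis of a class: the minimal permutations not in it. -/
def basisOf (C : Set Permutation) : Set Permutation :=
  {π | π ∉ C ∧ ∀ σ, PermLe σ π → σ ≠ π → σ ∈ C}

def FinitelyBased (C : Set Permutation) : Prop := (basisOf C).Finite

/-- The order-preserving equivalence between a lexicographic sigma of `Fin`s and `Fin` of the sum,
sending `⟨i, j⟩` to `n 0 + ⋯ + n (i-1) + j`. -/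
def sigmaFinFstEquiv {m : ℕ} (β : Fin (m + 1) → Type*) :
    (Σ i : Fin (m + 1), β i) ≃ (β 0 ⊕ Σ i : Fin m, β i.succ) where
  toFun x := Fin.cases (motive := fun i => β i → β 0 ⊕ Σ i : Fin m, β i.succ)
    Sum.inl (fun i j => Sum.inr ⟨i, j⟩) x.1 x.2
  invFun s := Sum.elim (fun j => ⟨0, j⟩) (fun p => ⟨p.1.succ, p.2⟩) s
  left_inv := by
    rintro ⟨i, j⟩
    induction i using Fin.cases <;> simp
  right_inv := by
    rintro (j | ⟨i, j⟩) <;> simp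

def sigmaFinEquiv : ∀ {m : ℕ} {n : Fin m → ℕ}, (Σ i : Fin m, Fin (n i)) ≃ Fin (∑ i, n i)
  | 0, n =>
    { toFun := fun x => x.1.elim0
      invFun := fun p => (Fin.cast (by simp) p : Fin 0).elim0
      left_inv := fun x => x.1.elim0
      right_inv := fun p => (Fin.cast (by simp) p : Fin 0).elim0 }
  | m + 1, n =>
    (sigmaFinFstEquiv fun i => Fin (n i)).trans <|
      ((Equiv.refl (Fin (n 0))).sumCongr sigmaFinEquiv).trans <|
        finSumFinEquiv.trans (finCongr (Fin.sum_univ_succ n).symm)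

/-- The inflation `σ[α 0, …, α (m-1)]` of `σ` by the permutations `α i`. -/
noncomputable def inflation {m : ℕ} (σ : PermOf m) {n : Fin m → ℕ}
    (α : ∀ i, PermOf (n i)) : PermOf (∑ i, n i) :=
  sigmaFinEquiv.symm.trans <|
    (Equiv.sigmaCongrRight fun i =>
        (α i).trans (finCongr (congrArg n (σ.symm_apply_apply i).symm))).trans <|
      (Equiv.sigmaCongrLeft (β := fun v : Fin m => Fin (n (σ.symm v))) σ).trans <|
        sigmaFinEquiv.trans (finCongr (Equiv.sum_comp σ.symm n))

/-- The direct sum `x ⊕ y` of two permutations. -/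
def dsum {a b : ℕ} (x : PermOf a) (y : PermOf b) : PermOf (a + b) :=
  finSumFinEquiv.symm.trans ((Equiv.sumCongr x y).trans finSumFinEquiv)

/-- The skew sum `x ⊖ y` of two permutations. -/
def ssum {a b : ℕ} (x : PermOf a) (y : PermOf b) : PermOf (a + b) :=
  finSumFinEquiv.symm.trans <| (Equiv.sumCongr x y).trans <|
    (Equiv.sumComm (Fin a) (Fin b)).trans <| finSumFinEquiv.trans (finCongr (Nat.add_comm b a))

def onePerm : Permutation := ⟨1, Equiv.refl _⟩

def perm12 : PermOf 2 := Equiv.refl _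

def perm21 : PermOf 2 := Equiv.swap 0 1

/-- Sums and skew sums at the level of `Permutation`. -/
def psum (x y : Permutation) : Permutation := ⟨x.1 + y.1, dsum x.2 y.2⟩

def pskew (x y : Permutation) : Permutation := ⟨x.1 + y.1, ssum x.2 y.2⟩

/-- Two permutations (of possibly different declared lengths) are the same pattern. -/
def SamePatt {a b : ℕ} (x : PermOf a) (y : PermOf b) : Prop :=
  PattContains x y ∧ PattContains y x

/-- The pattern (subpermutation) of `π` on a set `s` of positions. -/
noncomputable def pattOn {N : ℕ} (π : PermOf N) (s : Finset (Fin N)) : PermOf s.card :=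
  (Tuple.sort fun p : Fin s.card => π ((s.orderIsoOfFin rfl p : Fin N))).symm

def SumDecomposable (π : Permutation) : Prop :=
  ∃ x y : Permutation, 0 < x.1 ∧ 0 < y.1 ∧ π = psum x y

def SkewDecomposable (π : Permutation) : Prop :=
  ∃ x y : Permutation, 0 < x.1 ∧ 0 < y.1 ∧ π = pskew x y

/-- The property (set) of sum decomposable permutations. -/
def DSumSet : Set Permutation := {π | SumDecomposable π}

/-- The property (set) of skew decomposable permutations. -/
def DSkewSet : Set Permutation := {π | SkewDecomposable π}

/-- `t` is a sum splitting point of `x`: positions `≥ t` carry exactly the values `≥ t`. -/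
def SumSplitAt {a : ℕ} (x : PermOf a) (t : ℕ) : Prop :=
  ∀ p : Fin a, t ≤ (p : ℕ) ↔ t ≤ (x p : ℕ)

/-- `t` is a skew splitting point of `x`: positions `< t` carry exactly the values `≥ a - t`. -/
def SkewSplitAt {a : ℕ} (x : PermOf a) (t : ℕ) : Prop :=
  ∀ p : Fin a, (p : ℕ) < t ↔ a - t ≤ (x p : ℕ)

/-- `γ` is a sum-suffix of `x`. -/
def IsSumSuffixOf {b a : ℕ} (γ : PermOf b) (x : PermOf a) : Prop :=
  ∃ t, SumSplitAt x t ∧ SamePatt γ (pattOn x (Finset.univ.filter fun p => t ≤ (p : ℕ)))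

def IsSumPrefixOf {b a : ℕ} (γ : PermOf b) (x : PermOf a) : Prop :=
  ∃ t, SumSplitAt x t ∧ SamePatt γ (pattOn x (Finset.univ.filter fun p => (p : ℕ) < t))

def IsSkewSuffixOf {b a : ℕ} (γ : PermOf b) (x : PermOf a) : Prop :=
  ∃ t, SkewSplitAt x t ∧ SamePatt γ (pattOn x (Finset.univ.filter fun p => t ≤ (p : ℕ)))

def IsSkewPrefixOf {b a : ℕ} (γ : PermOf b) (x : PermOf a) : Prop :=
  ∃ t, SkewSplitAt x t ∧ SamePatt γ (pattOn x (Finset.univ.filter fun p => (p : ℕ) < t))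

/-- Length of the first sum component. -/
noncomputable def fscLen {a : ℕ} (x : PermOf a) : ℕ := sInf {t | 1 ≤ t ∧ SumSplitAt x t}

noncomputable def firstSumComp {a : ℕ} (x : PermOf a) : Permutation :=
  ⟨_, pattOn x (Finset.univ.filter fun p => (p : ℕ) < fscLen x)⟩

noncomputable def fskLen {a : ℕ} (x : PermOf a) : ℕ := sInf {t | 1 ≤ t ∧ SkewSplitAt x t}

noncomputable def firstSkewComp {a : ℕ} (x : PermOf a) : Permutation :=
  ⟨_, pattOn x (Finset.univ.filter fun p => (p : ℕ) < fskLen x)⟩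

open Classical in
/-- The first component of a permutation. -/
noncomputable def firstComp (π : Permutation) : Permutation :=
  if π ∈ DSumSet then firstSumComp π.2
  else if π ∈ DSkewSet then firstSkewComp π.2
  else π

/-- The inflation `C[U]` of one set of permutations by another. -/
def classInflate (C U : Set Permutation) : Set Permutation :=
  {π | ∃ (m : ℕ) (σ : PermOf m) (n : Fin m → ℕ) (α : ∀ i, PermOf (n i)),
      (⟨m, σ⟩ : Permutation) ∈ C ∧ (∀ i, 0 < n i) ∧
      (∀ i, (⟨n i, α i⟩ : Permutation) ∈ U) ∧ π = ⟨∑ i, n i, inflation σ α⟩}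

/-- A class is substitution closed if `C[C] ⊆ C`. -/
def SubstClosed (C : Set Permutation) : Prop := classInflate C C ⊆ C

/-- The substitution closure: the smallest substitution closed class containing `C`. -/
def substClosure (C : Set Permutation) : Set Permutation :=
  ⋂₀ {D | IsPermClass D ∧ SubstClosed D ∧ C ⊆ D}

/-- Iterated inflations: `C^[0] = {1}` and `C^[i+1] = C[C^[i]]`. -/
def iterInflate (C : Set Permutation) : ℕ → Set Permutation
  | 0 => {onePerm}
  | i + 1 => classInflate C (iterInflate C i)

/-- The class of one-point extensions of members of `C`. -/
def onePointExt (C : Set Permutation) : Set Permutation :=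
  {π | ∃ σ : Permutation, σ ∈ C ∧ σ.1 + 1 = π.1 ∧ PermLe σ π}

/-- A set of indices is contiguous. -/
def IsIntervalSet {n : ℕ} (s : Set (Fin n)) : Prop :=
  ∀ ⦃x⦄, x ∈ s → ∀ ⦃y⦄, y ∈ s → ∀ ⦃z⦄, x ≤ z → z ≤ y → z ∈ s

/-- `s` is an interval of the permutation `π`: both `s` and its image are contiguous. -/
def IsPermInterval {n : ℕ} (π : PermOf n) (s : Set (Fin n)) : Prop :=
  IsIntervalSet s ∧ IsIntervalSet (π '' s)

/-- A permutation is simple if it has length at least 2 and only trivial intervals. -/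
def IsSimple {n : ℕ} (π : PermOf n) : Prop :=
  2 ≤ n ∧ ∀ s : Set (Fin n), IsPermInterval π s → s.ncard ≤ 1 ∨ s = Set.univ

/-- The standard figure of a 0/±1 matrix (entries indexed (column, row), zero-based). -/
def stdFigure {t u : ℕ} (M : Fin t → Fin u → ℤ) : Set (ℝ × ℝ) :=
  {p | ∃ (k : Fin t) (l : Fin u) (s : ℝ), 0 ≤ s ∧ s ≤ 1 ∧
    ((M k l = 1 ∧ p = ((k : ℝ) + s, (l : ℝ) + s)) ∨
     (M k l = -1 ∧ p = ((k : ℝ) + s, (l : ℝ) + 1 - s)))}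

/-- The geometric grid class of a 0/±1 matrix. -/
def geomGridClass {t u : ℕ} (M : Fin t → Fin u → ℤ) : Set Permutation :=
  {π | ∃ p : Fin π.1 → ℝ × ℝ, (∀ i, p i ∈ stdFigure M) ∧
    (∀ i j : Fin π.1, i < j → (p i).1 < (p j).1) ∧
    (∀ i j : Fin π.1, π.2 i < π.2 j ↔ (p i).2 < (p j).2)}

/-- A set of permutations is geometrically griddable if it lies in some geometric grid class. -/
def GeomGriddable (C : Set Permutation) : Prop :=
  ∃ (t u : ℕ) (M : Fin t → Fin u → ℤ),
    (∀ k l, M k l = 0 ∨ M k l = 1 ∨ M k l = -1) ∧ C ⊆ geomGridClass M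

/-- A class is strongly rational if it and all of its subclasses have rational
generating functions. -/
def StronglyRational (C : Set Permutation) : Prop :=
  IsRationalPS (gfOf C) ∧ ∀ D, D ⊆ C → IsPermClass D → IsRationalPS (gfOf D)

/-- The interval of indices `[lo, hi)` inside `Fin m`, as a finset. -/
def idxIval (m lo hi : ℕ) : Finset (Fin m) :=
  Finset.univ.filter fun i => lo ≤ (i : ℕ) ∧ (i : ℕ) < hi

/-- `θ[γ]` is a `U`-decomposition of `π`. -/
def IsUDecompOf (U : Set Permutation) (π : Permutation) {m : ℕ} (θ : PermOf m)
    (n : Fin m → ℕ) (γ : ∀ i, PermOf (n i)) : Prop :=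
  (∀ i, 0 < n i) ∧ (∀ i, (⟨n i, γ i⟩ : Permutation) ∈ U) ∧ π = ⟨∑ i, n i, inflation θ γ⟩

def HasUDecompSkel (U : Set Permutation) (π θ : Permutation) : Prop :=
  ∃ n γ, IsUDecompOf U π θ.2 n γ

/-- `θ` is the `U`-profile of `π`: the containment-minimal skeleton of a `U`-decomposition. -/
def IsUProfile (U : Set Permutation) (π θ : Permutation) : Prop :=
  HasUDecompSkel U π θ ∧ ∀ θ', HasUDecompSkel U π θ' → PermLe θ θ'

/-- `θ[γ]` is the left-greedy `U`-decomposition of `π`: the skeleton is the `U`-profile and the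
sequence of block lengths is lexicographically maximal. -/
def IsLeftGreedy (U : Set Permutation) (π : Permutation) {m : ℕ} (θ : PermOf m)
    (n : Fin m → ℕ) (γ : ∀ i, PermOf (n i)) : Prop :=
  IsUDecompOf U π θ n γ ∧ IsUProfile U π ⟨m, θ⟩ ∧
    ∀ (n' : Fin m → ℕ) (γ' : ∀ i, PermOf (n' i)), IsUDecompOf U π θ n' γ' → n' ≠ n →
      ∃ i : Fin m, (∀ i' : Fin m, i' < i → n' i' = n i') ∧ n' i < n i

/-- A property is a set of permutations. -/
abbrev PProperty : Type := Set Permutation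

/-- The collection of properties of `P` satisfied by `π`. -/
def propsOf (P : Set PProperty) (π : Permutation) : Set PProperty := {S | S ∈ P ∧ π ∈ S}

/-- A framework: a skeleton together with a set of properties for each position. -/
abbrev Framework : Type := Σ m : ℕ, PermOf m × (Fin m → Set PProperty)

/-- The framework `F` describes `π`. -/
def FwDescribes (P : Set PProperty) (F : Framework) (π : Permutation) : Prop :=
  ∃ (n : Fin F.1 → ℕ) (α : ∀ i, PermOf (n i)), (∀ i, 0 < n i) ∧
    π = ⟨∑ i, n i, inflation F.2.1 α⟩ ∧ ∀ i, propsOf P ⟨n i, α i⟩ = F.2.2 i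

def FwNonempty (P : Set PProperty) (F : Framework) : Prop := ∃ π, FwDescribes P F π

/-- A simple framework: simple skeleton, with the extra condition for skeletons `12`, `21`. -/
def IsSimpleFw (F : Framework) : Prop :=
  IsSimple F.2.1 ∧
  ∀ i : Fin F.1, (i : ℕ) = 0 →
    (SamePatt F.2.1 perm12 → DSumSet ∉ F.2.2 i) ∧
    (SamePatt F.2.1 perm21 → DSkewSet ∉ F.2.2 i)

/-- A family of properties is query-complete. -/
def QueryComplete (P : Set PProperty) : Prop :=
  ∀ (m : ℕ) (σ : PermOf m) (n n' : Fin m → ℕ)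
    (α : ∀ i, PermOf (n i)) (α' : ∀ i, PermOf (n' i)),
    (∀ i, 0 < n i) → (∀ i, 0 < n' i) →
    (∀ i, propsOf P ⟨n i, α i⟩ = propsOf P ⟨n' i, α' i⟩) →
    propsOf P (⟨∑ i, n i, inflation σ α⟩ : Permutation)
      = propsOf P (⟨∑ i, n' i, inflation σ α'⟩ : Permutation)

/-- The avoidance property `Av(δ)`. -/
def AvSet (δ : Permutation) : Set Permutation := {π | ¬ PermLe δ π}

/-- The first component avoidance property `Av^{#1}(δ)`. -/
def AvFCSet (δ : Permutation) : Set Permutation := {π | ¬ PermLe δ (firstComp π)}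

/-- The family of properties `P_B`. -/
def PB (B : Set Permutation) : Set PProperty :=
  {DSumSet, DSkewSet} ∪ {S | ∃ δ, (∃ β ∈ B, PermLe δ β) ∧ S = AvSet δ}

/-- The family of properties `P̃_B`. -/
def PBt (B : Set Permutation) : Set PProperty :=
  PB B ∪ {S | ∃ δ, (∃ β ∈ B, PermLe δ β) ∧ S = AvFCSet δ}

/-- A partial multiplication matrix. -/
def IsPMM {t u : ℕ} (M : Fin t → Fin u → ℤ) : Prop :=
  ∃ (c : Fin t → ℤ) (r : Fin u → ℤ),
    (∀ k, c k = 1 ∨ c k = -1) ∧ (∀ l, r l = 1 ∨ r l = -1) ∧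
    ∀ k l, M k l = c k * r l ∨ M k l = 0

/-- The matrix `M^{×2}`: each line segment of the standard figure is subdivided in two. -/
def mTimes2 {t u : ℕ} (M : Fin t → Fin u → ℤ) : Fin (2 * t) → Fin (2 * u) → ℤ :=
  fun k l =>
    if M ⟨(k : ℕ) / 2, by have := k.isLt; omega⟩ ⟨(l : ℕ) / 2, by have := l.isLt; omega⟩ = 1
        ∧ (k : ℕ) % 2 = (l : ℕ) % 2 then 1
    else if M ⟨(k : ℕ) / 2, by have := k.isLt; omega⟩ ⟨(l : ℕ) / 2, by have := l.isLt; omega⟩ = -1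
        ∧ (k : ℕ) % 2 ≠ (l : ℕ) % 2 then -1
    else 0

/-- A regular language: one accepted by a DFA with finitely many states. -/
def IsRegularLang {A : Type _} (L : Set (List A)) : Prop :=
  ∃ (S : Type) (_ : Fintype S) (M : DFA A S), M.accepts = L

/-- The cell alphabet of a matrix: the nonzero cells. -/
def CellAlph {t u : ℕ} (M : Fin t → Fin u → ℤ) : Type := {kl : Fin t × Fin u // M kl.1 kl.2 ≠ 0}

/-- The point of the standard figure corresponding to the `i`-th letter of a word of cells,
relative to column signs `c` and row signs `r`. -/
noncomputable def pointOfLetter {t u : ℕ} (c : Fin t → ℤ) (r : Fin u → ℤ) (n : ℕ)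
    (w : Fin n → Fin t × Fin u) (i : Fin n) : ℝ × ℝ :=
  (if c (w i).1 = 1 then ((w i).1 : ℝ) + (((i : ℕ) + 1) / (n + 1) : ℝ)
     else ((w i).1 : ℝ) + 1 - (((i : ℕ) + 1) / (n + 1) : ℝ),
   if r (w i).2 = 1 then ((w i).2 : ℝ) + (((i : ℕ) + 1) / (n + 1) : ℝ)
     else ((w i).2 : ℝ) + 1 - (((i : ℕ) + 1) / (n + 1) : ℝ))

/-- The permutation determined by a family of points in the plane with pairwise distinct
coordinates: sort by `x`, rank by `y`. -/
noncomputable def permOfPoints {n : ℕ} (p : Fin n → ℝ × ℝ) : PermOf n :=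
  (Tuple.sort fun i => (p i).1).trans (Tuple.sort fun i => (p i).2).symm

/-- The map `φ^P` from words over `Σ × 2^P` to frameworks, built from the encoding `φ` and the
index correspondence `ψ`. -/
noncomputable def fwOfWord {A : Type _} {t u : ℕ} (c : Fin t → ℤ) (r : Fin u → ℤ)
    (cell : A → Fin t × Fin u) (qs : A → Set PProperty) (v : List A) : Framework :=
  ⟨v.length,
    (permOfPoints (pointOfLetter c r v.length fun j => cell (v.get j)),
     fun i => qs (v.get ((Tuple.sort fun j =>
        (pointOfLetter c r v.length (fun j' => cell (v.get j')) j).1) i)))⟩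

/-- The number of permutations of length `n` in `C`. -/
noncomputable def countLen (C : Set Permutation) (n : ℕ) : ℕ :=
  {π : PermOf n | (⟨n, π⟩ : Permutation) ∈ C}.ncard

section Containment

lemma permLe_refl (x : Permutation) : PermLe x x :=
  ⟨(OrderIso.refl (Fin x.1)).toOrderEmbedding, fun _ _ => Iff.rfl⟩

lemma permLe_trans {x y z : Permutation} (hxy : PermLe x y) (hyz : PermLe y z) : PermLe x z := by
  obtain ⟨f, hf⟩ := hxy
  obtain ⟨g, hg⟩ := hyz
  exact ⟨f.trans g, fun s t => (hf s t).trans (hg (f s) (f t))⟩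

lemma PermLe.length_le {x y : Permutation} (h : PermLe x y) : x.1 ≤ y.1 := by
  obtain ⟨f, -⟩ := h
  simpa using Fintype.card_le_of_injective f f.injective

lemma PermLe.eq_of_length_eq {x y : Permutation} (h : PermLe x y) (hlen : x.1 = y.1) :
    x = y := by
  obtain ⟨n, σ⟩ := x
  obtain ⟨_, π⟩ := y
  obtain rfl : n = _ := hlen
  obtain ⟨f, hf⟩ := h
  have hσπ : ∀ s t, σ s < σ t ↔ π s < π t := fun s t => by
    simpa only [f.strictMono.apply_eq] using hf s t
  have hmono : StrictMono (π ∘ σ.symm) := fun a b hab => by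
    simpa using (hσπ (σ.symm a) (σ.symm b)).1 (by simpa using hab)
  refine Sigma.ext rfl (heq_of_eq (Equiv.ext fun s => ?_))
  simpa using (hmono.apply_eq (x := σ s)).symm

/-- Along a subsequence of non-decreasing lengths, a bad sequence is an antichain. -/
theorem IsPwoClass.partiallyWellOrderedOn {U : Set Permutation} (hU : IsPwoClass U) :
    U.PartiallyWellOrderedOn PermLe := by
  rw [Set.partiallyWellOrderedOn_iff_exists_lt]
  intro f hf
  by_contra! hbad
  obtain ⟨g, hg⟩ := (wellQuasiOrdered_le (α := ℕ)).exists_monotone_subseq fun n => (f n).1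
  have hanti : ∀ m n, m ≠ n → ¬ PermLe (f (g m)) (f (g n)) := by
    intro m n hmn hle
    rcases hmn.lt_or_gt with hlt | hlt
    · exact hbad _ _ (g.strictMono hlt) hle
    · have heq := hle.eq_of_length_eq (hle.length_le.antisymm (hg _ _ hlt.le))
      exact hbad _ _ (g.strictMono hlt) (heq ▸ permLe_refl _)
  have hinj : Function.Injective (f ∘ g) := fun m n hmn => by
    by_contra hne
    have hmn : f (g m) = f (g n) := hmn
    exact hanti m n hne (hmn ▸ permLe_refl _)
  refine Set.infinite_range_of_injective hinj (hU _ ?_ ?_)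
  · exact Set.range_subset_iff.2 fun n => hf (g n)
  · rintro _ ⟨m, rfl⟩ _ ⟨n, rfl⟩ hne
    exact hanti m n fun h => hne (h ▸ rfl)

end Containment

theorem Set.PartiallyWellOrderedOn.of_encoding {α β : Type*} {r : α → α → Prop}
    {r' : β → β → Prop} {s : Set α} {t : Set β} (hs : s.PartiallyWellOrderedOn r)
    (E : α → β → Prop) (hE : ∀ b ∈ t, ∃ a ∈ s, E a b)
    (hr : ∀ a₁ a₂ b₁ b₂, E a₁ b₁ → E a₂ b₂ → r a₁ a₂ → r' b₁ b₂) :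
    t.PartiallyWellOrderedOn r' := by
  rw [Set.partiallyWellOrderedOn_iff_exists_lt]
  intro f hf
  choose g hgs hgE using fun n => hE (f n) (hf n)
  obtain ⟨m, n, hmn, hr'⟩ := hs.exists_lt hgs
  exact ⟨m, n, hmn, hr _ _ _ _ (hgE m) (hgE n) hr'⟩

section Inflation

def blockStart {m : ℕ} (n : Fin m → ℕ) (i : Fin m) : ℕ :=
  ∑ j ∈ Finset.univ.filter (· < i), n j

lemma blockStart_zero {m : ℕ} (n : Fin (m + 1) → ℕ) : blockStart n 0 = 0 := by
  simp [blockStart]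

lemma blockStart_succ {m : ℕ} (n : Fin (m + 1) → ℕ) (i : Fin m) :
    blockStart n i.succ = n 0 + blockStart (fun j => n j.succ) i := by
  simp only [blockStart, Finset.sum_filter, Fin.sum_univ_succ, Fin.succ_pos, if_true,
    Fin.succ_lt_succ_iff]

lemma blockStart_add_le {m : ℕ} (n : Fin m → ℕ) {i i' : Fin m} (h : i < i') :
    blockStart n i + n i ≤ blockStart n i' := by
  have hsub : insert i (Finset.univ.filter (· < i)) ⊆ Finset.univ.filter (· < i') := by
    intro j hj
    rcases Finset.mem_insert.1 hj with rfl | hj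
    · simpa using h
    · simpa using (Finset.mem_filter.1 hj).2.trans h
  calc blockStart n i + n i = ∑ j ∈ insert i (Finset.univ.filter (· < i)), n j := by
        rw [Finset.sum_insert (by simp), add_comm, blockStart]
    _ ≤ blockStart n i' := Finset.sum_le_sum_of_subset hsub

lemma sigmaFinEquiv_val {m : ℕ} {n : Fin m → ℕ} (x : Σ i : Fin m, Fin (n i)) :
    (sigmaFinEquiv x : ℕ) = blockStart n x.1 + x.2 := by
  induction m with
  | zero => exact x.1.elim0
  | succ m ih =>
    obtain ⟨i, j⟩ := x
    induction i using Fin.cases with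
    | zero => simp [sigmaFinEquiv, sigmaFinFstEquiv, blockStart_zero]
    | succ i =>
      have := ih (n := fun q => n q.succ) ⟨i, j⟩
      simp only [sigmaFinEquiv, sigmaFinFstEquiv, Equiv.trans_apply, Equiv.coe_fn_mk,
        Fin.cases_succ, Equiv.sumCongr_apply, Sum.map_inr, finSumFinEquiv_apply_right,
        finCongr_apply, Fin.val_cast, Fin.val_natAdd] at *
      rw [this, blockStart_succ]
      omega

lemma sigmaFinEquiv_lt_iff {m : ℕ} {n : Fin m → ℕ} (x y : Σ i : Fin m, Fin (n i)) :
    sigmaFinEquiv x < sigmaFinEquiv y ↔ x.1 < y.1 ∨ x.1 = y.1 ∧ (x.2 : ℕ) < y.2 := by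
  obtain ⟨i, a⟩ := x
  obtain ⟨i', b⟩ := y
  rw [Fin.lt_def, sigmaFinEquiv_val, sigmaFinEquiv_val]
  rcases lt_trichotomy i i' with hlt | rfl | hgt
  · have := blockStart_add_le n hlt
    have := a.isLt
    simp only [hlt, true_or, iff_true]
    omega
  · simp
  · have := blockStart_add_le n hgt
    have := b.isLt
    simp only [hgt.not_gt, hgt.ne', false_and, or_self, iff_false, not_lt]
    omega

lemma inflation_sigmaFinEquiv {m : ℕ} (σ : PermOf m) {n : Fin m → ℕ} (α : ∀ i, PermOf (n i))
    (i : Fin m) (j : Fin (n i)) :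
    (inflation σ α (sigmaFinEquiv ⟨i, j⟩) : ℕ) =
      sigmaFinEquiv (n := fun v => n (σ.symm v))
        ⟨σ i, Fin.cast (by simp) (α i j)⟩ := by
  simp [inflation]

lemma inflation_lt_iff {m : ℕ} (σ : PermOf m) {n : Fin m → ℕ} (α : ∀ i, PermOf (n i))
    (x y : Σ i : Fin m, Fin (n i)) :
    inflation σ α (sigmaFinEquiv x) < inflation σ α (sigmaFinEquiv y) ↔
      σ x.1 < σ y.1 ∨ x.1 = y.1 ∧ (α x.1 x.2 : ℕ) < α y.1 y.2 := by
  obtain ⟨i, a⟩ := x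
  obtain ⟨i', b⟩ := y
  rw [Fin.lt_def, inflation_sigmaFinEquiv, inflation_sigmaFinEquiv, ← Fin.lt_def,
    sigmaFinEquiv_lt_iff]
  simp

theorem permLe_inflation {m₁ m₂ : ℕ} {σ₁ : PermOf m₁} {σ₂ : PermOf m₂}
    {n₁ : Fin m₁ → ℕ} {n₂ : Fin m₂ → ℕ} {α₁ : ∀ i, PermOf (n₁ i)} {α₂ : ∀ i, PermOf (n₂ i)}
    (ι : Fin m₁ → Fin m₂) (hι : StrictMono ι)
    (hσ : ∀ i j, σ₁ i < σ₁ j ↔ σ₂ (ι i) < σ₂ (ι j))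
    (hα : ∀ i, PermLe ⟨n₁ i, α₁ i⟩ ⟨n₂ (ι i), α₂ (ι i)⟩) :
    PermLe ⟨_, inflation σ₁ α₁⟩ ⟨_, inflation σ₂ α₂⟩ := by
  choose g hg using hα
  let F : (Σ i, Fin (n₁ i)) → Σ i, Fin (n₂ i) := fun x => ⟨ι x.1, g x.1 x.2⟩
  have hFpos : ∀ x y, sigmaFinEquiv x < sigmaFinEquiv y →
      sigmaFinEquiv (F x) < sigmaFinEquiv (F y) := by
    rintro ⟨i, a⟩ ⟨i', b⟩
    simp only [sigmaFinEquiv_lt_iff, F]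
    rintro (hlt | ⟨rfl, hab⟩)
    · exact Or.inl (hι hlt)
    · exact Or.inr ⟨rfl, (g i).strictMono (Fin.lt_def.2 hab)⟩
  have hFval : ∀ x y, inflation σ₁ α₁ (sigmaFinEquiv x) < inflation σ₁ α₁ (sigmaFinEquiv y) ↔
      inflation σ₂ α₂ (sigmaFinEquiv (F x)) < inflation σ₂ α₂ (sigmaFinEquiv (F y)) := by
    rintro ⟨i, a⟩ ⟨i', b⟩
    simp only [inflation_lt_iff, F, hσ, hι.injective.eq_iff]
    constructor <;> rintro (hlt | ⟨rfl, hab⟩)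
    · exact Or.inl hlt
    · exact Or.inr ⟨rfl, (hg i a b).1 (Fin.lt_def.2 hab)⟩
    · exact Or.inl hlt
    · exact Or.inr ⟨rfl, (hg i a b).2 (Fin.lt_def.2 hab)⟩
  let f : Fin (∑ i, n₁ i) → Fin (∑ i, n₂ i) := fun z => sigmaFinEquiv (F (sigmaFinEquiv.symm z))
  have hf : StrictMono f := fun z z' hz => hFpos _ _ (by simpa using hz)
  refine ⟨OrderEmbedding.ofStrictMono f hf, fun s t => ?_⟩
  simpa using hFval (sigmaFinEquiv.symm s) (sigmaFinEquiv.symm t)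

end Inflation

section HalfSegments

noncomputable def segPos {t : ℕ} (c : Fin t × Bool) (v : ℝ) : ℝ :=
  ((c.1 : ℕ) : ℝ) + if c.2 then v else 1 - v

lemma segPos_lt_segPos_of_lt {t : ℕ} {c d : Fin t × Bool} {v w v' w' : ℝ}
    (hv : v ∈ Set.Icc (0 : ℝ) (1 / 2)) (hw : w ∈ Set.Icc (0 : ℝ) (1 / 2))
    (hv' : v' ∈ Set.Icc (0 : ℝ) (1 / 2)) (hw' : w' ∈ Set.Icc (0 : ℝ) (1 / 2))
    (hne : segPos c v' ≠ segPos d w') (hvw : v < w → v' ≤ w') (hwv : w < v → w' ≤ v')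
    (h : segPos c v < segPos d w) : segPos c v' < segPos d w' := by
  refine lt_of_le_of_ne ?_ hne
  obtain ⟨c, β⟩ := c
  obtain ⟨d, γ⟩ := d
  simp only [segPos, Set.mem_Icc] at *
  rcases lt_trichotomy c d with hcd | rfl | hcd
  · have : ((c : ℕ) : ℝ) + 1 ≤ (d : ℕ) := by exact_mod_cast Fin.lt_def.1 hcd
    split_ifs <;> linarith
  · cases β <;> cases γ <;> simp only [Bool.false_eq_true, if_true, if_false] at h ⊢
    · linarith [hwv (by linarith)]
    · linarith
    · linarith
    · linarith [hvw (by linarith)]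
  · have : ((d : ℕ) : ℝ) + 1 ≤ (c : ℕ) := by exact_mod_cast Fin.lt_def.1 hcd
    split_ifs at h <;> linarith

lemma segPos_lt_iff_of_comp {ι₁ ι₂ : Type*} {t : ℕ} {c₁ : ι₁ → Fin t × Bool}
    {c₂ : ι₂ → Fin t × Bool} {v₁ : ι₁ → ℝ} {v₂ : ι₂ → ℝ}
    (hv₁ : ∀ i, v₁ i ∈ Set.Icc (0 : ℝ) (1 / 2)) (hv₂ : ∀ i, v₂ i ∈ Set.Icc (0 : ℝ) (1 / 2))
    (hinj₁ : Function.Injective fun i => segPos (c₁ i) (v₁ i))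
    (hinj₂ : Function.Injective fun i => segPos (c₂ i) (v₂ i))
    {ι : ι₁ → ι₂} (hι : Function.Injective ι) (hc : ∀ i, c₂ (ι i) = c₁ i)
    (hv : ∀ i j, v₁ i < v₁ j → v₂ (ι i) ≤ v₂ (ι j)) (i j : ι₁) :
    segPos (c₁ i) (v₁ i) < segPos (c₁ j) (v₁ j) ↔
      segPos (c₂ (ι i)) (v₂ (ι i)) < segPos (c₂ (ι j)) (v₂ (ι j)) := by
  have hmap : ∀ i j, segPos (c₁ i) (v₁ i) < segPos (c₁ j) (v₁ j) →
      segPos (c₂ (ι i)) (v₂ (ι i)) < segPos (c₂ (ι j)) (v₂ (ι j)) := by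
    intro i j hij
    have hne : i ≠ j := fun h => hij.ne (by rw [h])
    rw [hc, hc]
    refine segPos_lt_segPos_of_lt (hv₁ i) (hv₁ j) (hv₂ _) (hv₂ _) ?_ (hv i j) (hv j i) hij
    rw [← hc i, ← hc j]
    exact hinj₂.ne (hι.ne hne)
  refine ⟨hmap i j, fun h => ?_⟩
  rcases lt_trichotomy (segPos (c₁ i) (v₁ i)) (segPos (c₁ j) (v₁ j)) with hlt | heq | hgt
  · exact hlt
  · obtain rfl : i = j := hinj₁ heq
    exact absurd h (lt_irrefl _)
  · exact absurd (hmap j i hgt) h.not_gt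

lemma exists_segPos_of_mem_stdFigure {t u : ℕ} {M : Fin t → Fin u → ℤ} {p : ℝ × ℝ}
    (hp : p ∈ stdFigure M) :
    ∃ (c : Fin t × Bool) (r : Fin u × Bool), ∃ v ∈ Set.Icc (0 : ℝ) (1 / 2),
      p = (segPos c v, segPos r v) := by
  obtain ⟨k, l, s, hs0, hs1, ⟨-, rfl⟩ | ⟨-, rfl⟩⟩ := hp <;> by_cases hs : s ≤ 1 / 2
  · exact ⟨(k, true), (l, true), s, ⟨hs0, hs⟩, by simp [segPos]⟩
  · refine ⟨(k, false), (l, false), 1 - s, ⟨by linarith, by linarith⟩, ?_⟩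
    simp [segPos]
  · refine ⟨(k, true), (l, false), s, ⟨hs0, hs⟩, ?_⟩
    simp [segPos, add_sub_assoc]
  · refine ⟨(k, false), (l, true), 1 - s, ⟨by linarith, by linarith⟩, ?_⟩
    simp [segPos, add_sub_assoc]

end HalfSegments

lemma List.SublistForall₂.exists_strictMono_of_ofFn {α : Type*} {R : α → α → Prop}
    {m₁ m₂ : ℕ} {f₁ : Fin m₁ → α} {f₂ : Fin m₂ → α}
    (h : List.SublistForall₂ R (List.ofFn f₁) (List.ofFn f₂)) :
    ∃ φ : Fin m₁ → Fin m₂, StrictMono φ ∧ ∀ j, R (f₁ j) (f₂ (φ j)) := by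
  obtain ⟨L, hfor, hsub⟩ := List.sublistForall₂_iff.1 h
  obtain ⟨f, hf⟩ := List.sublist_iff_exists_fin_orderEmbedding_get_eq.1 hsub
  have hlen₁ : (List.ofFn f₁).length = m₁ := List.length_ofFn
  have hlenL : L.length = m₁ := hfor.length_eq.symm.trans hlen₁
  have hlen₂ : (List.ofFn f₂).length = m₂ := List.length_ofFn
  refine ⟨fun j => Fin.cast hlen₂ (f (Fin.cast hlenL.symm j)), fun _ _ hab => f.strictMono hab,
    fun j => ?_⟩
  have hR := hfor.get (i := j) (by simp) (by simp [hlenL])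
  rw [show (⟨j, _⟩ : Fin L.length) = Fin.cast hlenL.symm j from rfl, hf] at hR
  simp only [List.get_ofFn] at hR
  exact hR

section GridInflation

/-- A half-segment (its column and row, each with the direction in which that coordinate moves
as the parameter grows) together with a block. -/
abbrev GridLetter (t u : ℕ) : Type := ((Fin t × Bool) × (Fin u × Bool)) × Permutation

def LetterLe {t u : ℕ} (a b : GridLetter t u) : Prop := a.1 = b.1 ∧ PermLe a.2 b.2

instance {t u : ℕ} : IsPreorder (GridLetter t u) LetterLe where
  refl _ := ⟨rfl, permLe_refl _⟩
  trans _ _ _ hab hbc := ⟨hab.1.trans hbc.1, permLe_trans hab.2 hbc.2⟩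

structure GridInflation (t u : ℕ) (U : Set Permutation) (π : Permutation) where
  m : ℕ
  σ : PermOf m
  n : Fin m → ℕ
  α : ∀ i, PermOf (n i)
  mem : ∀ i, (⟨n i, α i⟩ : Permutation) ∈ U
  eq : π = ⟨∑ i, n i, inflation σ α⟩
  col : Fin m → Fin t × Bool
  row : Fin m → Fin u × Bool
  v : Fin m → ℝ
  v_mem : ∀ i, v i ∈ Set.Icc (0 : ℝ) (1 / 2)
  x_strictMono : StrictMono fun i => segPos (col i) (v i)
  lt_iff_y_lt : ∀ i j, σ i < σ j ↔ segPos (row i) (v i) < segPos (row j) (v j)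

namespace GridInflation

variable {t u : ℕ} {U : Set Permutation} {π π₁ π₂ : Permutation}

lemma nonempty_of_mem_classInflate {M : Fin t → Fin u → ℤ} {C : Set Permutation}
    (hCM : C ⊆ geomGridClass M) (hπ : π ∈ classInflate C U) : Nonempty (GridInflation t u U π) := by
  obtain ⟨m, σ, n, α, hσ, -, hα, rfl⟩ := hπ
  obtain ⟨p, hpM, hpx, hpy⟩ := hCM hσ
  choose col row v hv hp using fun i => exists_segPos_of_mem_stdFigure (hpM i)
  exact ⟨{ m, σ, n, α, col, row, v
           mem := hα
           eq := rfl
           v_mem := hv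
           x_strictMono := fun i j hij => by simpa [hp] using hpx i j hij
           lt_iff_y_lt := fun i j => by simpa [hp] using hpy i j }⟩

variable (W : GridInflation t u U π)

lemma y_injective : Function.Injective fun i => segPos (W.row i) (W.v i) := by
  intro i j hij
  apply W.σ.injective
  rcases lt_trichotomy (W.σ i) (W.σ j) with hlt | heq | hgt
  · exact absurd ((W.lt_iff_y_lt i j).1 hlt) hij.not_lt
  · exact heq
  · exact absurd ((W.lt_iff_y_lt j i).1 hgt) hij.not_gt

noncomputable def letter (i : Fin W.m) : GridLetter t u :=
  ((W.col i, W.row i), ⟨W.n i, W.α i⟩)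

noncomputable def word : List (GridLetter t u) :=
  List.ofFn fun j => W.letter (Tuple.sort W.v j)

lemma word_mem : W.word ∈ {w : List (GridLetter t u) | ∀ a ∈ w, a ∈ Set.univ ×ˢ U} := by
  intro a ha
  obtain ⟨j, rfl⟩ := List.mem_ofFn.1 ha
  exact ⟨trivial, W.mem _⟩

/-- Matching letters keep their half-segments and a weakly increasing parameter, so each
coordinate of the skeleton compares the same way in both pictures. -/
theorem permLe_of_sublistForall₂ (W₁ : GridInflation t u U π₁) (W₂ : GridInflation t u U π₂)
    (h : List.SublistForall₂ LetterLe W₁.word W₂.word) : PermLe π₁ π₂ := by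
  obtain ⟨φ, hφ, hφR⟩ := h.exists_strictMono_of_ofFn
  set ι : Fin W₁.m → Fin W₂.m := fun i => Tuple.sort W₂.v (φ ((Tuple.sort W₁.v).symm i))
  have hι : Function.Injective ι := fun i j hij =>
    (Tuple.sort W₁.v).symm.injective (hφ.injective ((Tuple.sort W₂.v).injective hij))
  have hletter : ∀ i, LetterLe (W₁.letter i) (W₂.letter (ι i)) := fun i => by
    simpa using hφR ((Tuple.sort W₁.v).symm i)
  have hcol : ∀ i, W₂.col (ι i) = W₁.col i := fun i => (congrArg Prod.fst (hletter i).1).symm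
  have hrow : ∀ i, W₂.row (ι i) = W₁.row i := fun i => (congrArg Prod.snd (hletter i).1).symm
  have hv : ∀ i j, W₁.v i < W₁.v j → W₂.v (ι i) ≤ W₂.v (ι j) := by
    intro i j hij
    have hpos : (Tuple.sort W₁.v).symm i < (Tuple.sort W₁.v).symm j :=
      (Tuple.monotone_sort W₁.v).reflect_lt (by simpa using hij)
    exact Tuple.monotone_sort W₂.v (hφ hpos).le
  have hx := segPos_lt_iff_of_comp W₁.v_mem W₂.v_mem W₁.x_strictMono.injective
    W₂.x_strictMono.injective hι hcol hv
  have hy := segPos_lt_iff_of_comp W₁.v_mem W₂.v_mem W₁.y_injective W₂.y_injective hι hrow hv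
  rw [W₁.eq, W₂.eq]
  refine permLe_inflation ι (fun i j hij => ?_) (fun i j => ?_) (fun i => (hletter i).2)
  · exact W₂.x_strictMono.lt_iff_lt.1 ((hx i j).1 (W₁.x_strictMono hij))
  · rw [W₁.lt_iff_y_lt, W₂.lt_iff_y_lt, hy]

end GridInflation

end GridInflation

theorem classInflate_pwo_general
    (C U : Set Permutation) (hCg : GeomGriddable C)
    (hUpwo : IsPwoClass U) :
    IsPwoClass (classInflate C U) := by
  obtain ⟨t, u, M, -, hCM⟩ := hCg
  have hletters : ((Set.univ : Set ((Fin t × Bool) × (Fin u × Bool))) ×ˢ U).PartiallyWellOrderedOn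
      LetterLe := Set.finite_univ.partiallyWellOrderedOn.prod hUpwo.partiallyWellOrderedOn
  have hCU : (classInflate C U).PartiallyWellOrderedOn PermLe :=
    (Set.PartiallyWellOrderedOn.partiallyWellOrderedOn_sublistForall₂ LetterLe hletters).of_encoding
      (fun w π => ∃ W : GridInflation t u U π, W.word = w)
      (fun π hπ =>
        let ⟨W⟩ := GridInflation.nonempty_of_mem_classInflate hCM hπ
        ⟨W.word, W.word_mem, W, rfl⟩)
      (by
        rintro _ _ π₁ π₂ ⟨W₁, rfl⟩ ⟨W₂, rfl⟩ h
        exact W₁.permLe_of_sublistForall₂ W₂ h)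
  intro A hA hanti
  exact IsAntichain.finite_of_partiallyWellOrderedOn hanti (hCU.mono hA)

/-- The inflation of a geometrically griddable class by a partially well-ordered
class is partially well-ordered. -/
theorem classInflate_pwo
    (C U : Set Permutation) (hC : IsPermClass C) (hCg : GeomGriddable C)
    (hU : IsPermClass U) (hUpwo : IsPwoClass U) :
    IsPwoClass (classInflate C U) :=
  classInflate_pwo_general C U hCg hUpwo
end

section
/- For every finite matrix M with entries in {0, 1, −1}, the matrix M^{×2} is a partial multiplication matrix (with column signs c_k = (−1)^k and row signs r_ℓ = (−1)^ℓ) and Geom(M^{×2}) = Geom(M). Consequently, every geometric grid class is the geometric grid class of a partial multiplication matrix. -/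
open scoped BigOperators

section Aux

lemma mTimes2_signs {t u : ℕ} (M : Fin t → Fin u → ℤ) (k : Fin (2*t)) (l : Fin (2*u)) :
    mTimes2 M k l = (-1)^(k:ℕ) * (-1)^(l:ℕ) ∨ mTimes2 M k l = 0 := by
  unfold mTimes2
  split_ifs with h1 h2
  · left
    rw [← pow_add]
    have he : ((k:ℕ) + l) % 2 = 0 := by omega
    rw [(Nat.even_iff.mpr he).neg_one_pow]
  · left
    rw [← pow_add]
    have ho : ((k:ℕ) + l) % 2 = 1 := by omega
    rw [(Nat.odd_iff.mpr ho).neg_one_pow]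
  · right; rfl

lemma mTimes2_apply {t u : ℕ} (M : Fin t → Fin u → ℤ) (k : Fin t) (l : Fin u)
    (a b : ℕ) (ha : a < 2) (hb : b < 2) :
    mTimes2 M ⟨2*(k:ℕ)+a, by omega⟩ ⟨2*(l:ℕ)+b, by omega⟩ =
      if M k l = 1 ∧ a = b then 1 else if M k l = -1 ∧ a ≠ b then -1 else 0 := by
  unfold mTimes2
  have hk : (⟨(2*(k:ℕ)+a)/2, by omega⟩ : Fin t) = k := Fin.ext (by simp; omega)
  have hl : (⟨(2*(l:ℕ)+b)/2, by omega⟩ : Fin u) = l := Fin.ext (by simp; omega)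
  have hka : (2*(k:ℕ)+a) % 2 = a := by omega
  have hlb : (2*(l:ℕ)+b) % 2 = b := by omega
  simp only [hk, hl, hka, hlb]

lemma mem_stdFigure_mTimes2 {t u : ℕ} (M : Fin t → Fin u → ℤ) (p : ℝ × ℝ) :
    p ∈ stdFigure (mTimes2 M) ↔ (p.1/2, p.2/2) ∈ stdFigure M := by
  constructor
  · rintro ⟨k', l', s', hs0, hs1, h⟩
    have hdvm_k : (k' : ℕ) = 2 * ((k':ℕ)/2) + (k':ℕ)%2 := by omega
    have hdvm_l : (l' : ℕ) = 2 * ((l':ℕ)/2) + (l':ℕ)%2 := by omega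
    have hk2 : ((k':ℕ)/2) < t := by have := k'.isLt; omega
    have hl2 : ((l':ℕ)/2) < u := by have := l'.isLt; omega
    -- extract info from the mTimes2 value
    rcases h with ⟨hv, hp⟩ | ⟨hv, hp⟩
    · -- value 1 : first if-branch holds
      unfold mTimes2 at hv
      split_ifs at hv with h1 h2
      · obtain ⟨hM1, hpar⟩ := h1
        have hmle : (((k':ℕ)%2 : ℕ) : ℝ) ≤ 1 := by
          rcases Nat.mod_two_eq_zero_or_one (k':ℕ) with h0 | h0 <;> rw [h0] <;> norm_num
        have hmge : (0:ℝ) ≤ ((k':ℕ)%2 : ℕ) := Nat.cast_nonneg _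
        refine ⟨⟨_, hk2⟩, ⟨_, hl2⟩, ((((k':ℕ)%2 : ℕ) : ℝ) + s')/2, by linarith, by linarith,
          Or.inl ⟨hM1, ?_⟩⟩
        rw [hp]
        have e1 : ((k' : Fin (2*t)) : ℝ) = 2 * (((k':ℕ)/2 : ℕ) : ℝ) + (((k':ℕ)%2 : ℕ) : ℝ) := by
          exact_mod_cast hdvm_k
        rw [← hpar] at hdvm_l
        have e2 : ((l' : Fin (2*u)) : ℝ) = 2 * (((l':ℕ)/2 : ℕ) : ℝ) + (((k':ℕ)%2 : ℕ) : ℝ) := by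
          exact_mod_cast hdvm_l
        simp only [Prod.mk.injEq]
        constructor <;> (simp only [e1, e2]; ring)
      · exact absurd hv (by norm_num)
    · -- value -1 : second if-branch
      unfold mTimes2 at hv
      split_ifs at hv with h1 h2
      · obtain ⟨hM1, hpar⟩ := h2
        have hmle : (((k':ℕ)%2 : ℕ) : ℝ) ≤ 1 := by
          rcases Nat.mod_two_eq_zero_or_one (k':ℕ) with h0 | h0 <;> rw [h0] <;> norm_num
        have hmge : (0:ℝ) ≤ ((k':ℕ)%2 : ℕ) := Nat.cast_nonneg _
        refine ⟨⟨_, hk2⟩, ⟨_, hl2⟩, ((((k':ℕ)%2 : ℕ) : ℝ) + s')/2, by linarith, by linarith,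
          Or.inr ⟨hM1, ?_⟩⟩
        rw [hp]
        have e1 : ((k' : Fin (2*t)) : ℝ) = 2 * (((k':ℕ)/2 : ℕ) : ℝ) + (((k':ℕ)%2 : ℕ) : ℝ) := by
          exact_mod_cast hdvm_k
        have hkl : (k':ℕ)%2 < 2 := Nat.mod_lt _ (by norm_num)
        have hll : (l':ℕ)%2 < 2 := Nat.mod_lt _ (by norm_num)
        have h2'' : (l' : ℕ) + (k':ℕ)%2 = 2 * ((l':ℕ)/2) + 1 := by omega
        have e2 : ((l' : Fin (2*u)) : ℝ) = 2 * (((l':ℕ)/2 : ℕ) : ℝ) + 1 - (((k':ℕ)%2 : ℕ) : ℝ) := by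
          have := congrArg (fun n : ℕ => (n : ℝ)) h2''
          push_cast at this
          linarith
        simp only [Prod.mk.injEq]
        constructor <;> (simp only [e1, e2]; ring)
  · rintro ⟨k, l, s, hs0, hs1, h⟩
    rcases h with ⟨hM1, hp⟩ | ⟨hM1, hp⟩
    · -- diagonal segment
      have hp1 : p.1 = 2*(k:ℝ) + 2*s := by
        have := congrArg Prod.fst hp; simp at this; linarith
      have hp2 : p.2 = 2*(l:ℝ) + 2*s := by
        have := congrArg Prod.snd hp; simp at this; linarith
      rcases le_or_gt s (1/2) with hhalf | hhalf
      · refine ⟨⟨2*(k:ℕ)+0, by omega⟩, ⟨2*(l:ℕ)+0, by omega⟩, 2*s, by linarith, by linarith,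
          Or.inl ⟨?_, ?_⟩⟩
        · rw [mTimes2_apply M k l 0 0 (by omega) (by omega)]
          simp [hM1]
        · apply Prod.ext <;> simp [hp1, hp2] <;> push_cast <;> ring
      · refine ⟨⟨2*(k:ℕ)+1, by omega⟩, ⟨2*(l:ℕ)+1, by omega⟩, 2*s-1, by linarith, by linarith,
          Or.inl ⟨?_, ?_⟩⟩
        · rw [mTimes2_apply M k l 1 1 (by omega) (by omega)]
          simp [hM1]
        · apply Prod.ext <;> simp [hp1, hp2] <;> push_cast <;> ring
    · -- antidiagonal segment
      have hp1 : p.1 = 2*(k:ℝ) + 2*s := by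
        have := congrArg Prod.fst hp; simp at this; linarith
      have hp2 : p.2 = 2*(l:ℝ) + 2 - 2*s := by
        have := congrArg Prod.snd hp; simp at this; linarith
      rcases le_or_gt s (1/2) with hhalf | hhalf
      · refine ⟨⟨2*(k:ℕ)+0, by omega⟩, ⟨2*(l:ℕ)+1, by omega⟩, 2*s, by linarith, by linarith,
          Or.inr ⟨?_, ?_⟩⟩
        · rw [mTimes2_apply M k l 0 1 (by omega) (by omega)]
          simp [hM1]
        · apply Prod.ext <;> simp [hp1, hp2] <;> push_cast <;> ring
      · refine ⟨⟨2*(k:ℕ)+1, by omega⟩, ⟨2*(l:ℕ)+0, by omega⟩, 2*s-1, by linarith, by linarith,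
          Or.inr ⟨?_, ?_⟩⟩
        · rw [mTimes2_apply M k l 1 0 (by omega) (by omega)]
          simp [hM1]
        · apply Prod.ext <;> simp [hp1, hp2] <;> push_cast <;> ring

lemma geom_mTimes2 {t u : ℕ} (M : Fin t → Fin u → ℤ) :
    geomGridClass (mTimes2 M) = geomGridClass M := by
  ext π
  constructor
  · rintro ⟨p, h1, h2, h3⟩
    refine ⟨fun i => ((p i).1/2, (p i).2/2), fun i => (mem_stdFigure_mTimes2 M _).mp (h1 i),
      fun i j hij => ?_, fun i j => ?_⟩
    · have := h2 i j hij; dsimp; linarith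
    · rw [h3]; dsimp; constructor <;> intro <;> linarith
  · rintro ⟨p, h1, h2, h3⟩
    refine ⟨fun i => (2*(p i).1, 2*(p i).2), fun i => ?_, fun i j hij => ?_, fun i j => ?_⟩
    · rw [mem_stdFigure_mTimes2 M]
      have : ((2*(p i).1)/2, (2*(p i).2)/2) = p i := by
        apply Prod.ext <;> simp <;> ring
      rw [this]; exact h1 i
    · have := h2 i j hij; dsimp; linarith
    · rw [h3]; dsimp; constructor <;> intro <;> linarith

end Aux

/-- `M^{×2}` is a partial multiplication matrix with column signs `(-1)^k` and row
signs `(-1)^l`, and `Geom(M^{×2}) = Geom(M)`; consequently every geometric grid class is the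
geometric grid class of a partial multiplication matrix. -/
theorem mTimes2_pmm_and_geom
    {t u : ℕ} (M : Fin t → Fin u → ℤ)
    (hM : ∀ k l, M k l = 0 ∨ M k l = 1 ∨ M k l = -1) :
    (∀ (k : Fin (2 * t)) (l : Fin (2 * u)),
        mTimes2 M k l = (-1) ^ (k : ℕ) * (-1) ^ (l : ℕ) ∨ mTimes2 M k l = 0) ∧
    geomGridClass (mTimes2 M) = geomGridClass M ∧
    ∀ (t' u' : ℕ) (M' : Fin t' → Fin u' → ℤ),
      (∀ k l, M' k l = 0 ∨ M' k l = 1 ∨ M' k l = -1) →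
      ∃ (t'' u'' : ℕ) (M'' : Fin t'' → Fin u'' → ℤ),
        IsPMM M'' ∧ (∀ k l, M'' k l = 0 ∨ M'' k l = 1 ∨ M'' k l = -1) ∧
        geomGridClass M'' = geomGridClass M' := by
  refine ⟨mTimes2_signs M, geom_mTimes2 M, fun t' u' M' hM' => ?_⟩
  refine ⟨2*t', 2*u', mTimes2 M', ⟨fun k => (-1)^(k:ℕ), fun l => (-1)^(l:ℕ), ?_, ?_, mTimes2_signs M'⟩, ?_, geom_mTimes2 M'⟩
  · intro k; rcases Nat.even_or_odd (k:ℕ) with h | h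
    · left; exact h.neg_one_pow
    · right; exact h.neg_one_pow
  · intro l; rcases Nat.even_or_odd (l:ℕ) with h | h
    · left; exact h.neg_one_pow
    · right; exact h.neg_one_pow
  · intro k l
    unfold mTimes2
    split_ifs <;> simp
end
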